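/- There exists a bijection f : A → B between two θ-closed, discrete subsets A, B of the Bing space B that cannot be extended to a homeomorphism of the Bing space, because A is not θ-discrete while B is θ-discrete. -/

import Mathlib

/-- A point of the Bing space: a rational pair `(x, y)` with `0 ≤ y`. -/
structure BingPt where
  x : ℚ
  y : ℚ
  hy : 0 ≤ y

/-- The pair of base "intervals" attached to the point `(a,b)`:
rational points `(x,0)` with `|x - (a - b/√3)| < ε` or `|x - (a + b/√3)| < ε`. -/
def wedge (a b : ℚ) (ε : ℝ) : Set BingPt :=
  {z : BingPt | z.y = 0 ∧ (|(z.x : ℝ) - ((a : ℝ) - (b : ℝ) / Real.sqrt 3)| < ε ∨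
    |(z.x : ℝ) - ((a : ℝ) + (b : ℝ) / Real.sqrt 3)| < ε)}

/-- A set `U` is Bing-open if each of its points `(a,b)` admits `ε > 0`
with the corresponding base intervals contained in `U`. -/
def BingOpen (U : Set BingPt) : Prop :=
  ∀ z ∈ U, ∃ ε : ℝ, 0 < ε ∧ wedge z.x z.y ε ⊆ U

/-- The Bing topology. -/
instance : TopologicalSpace BingPt where
  IsOpen := BingOpen
  isOpen_univ := fun _ _ => ⟨1, one_pos, fun _ _ => trivial⟩
  isOpen_inter := by
    intro U V hU hV z hz
    obtain ⟨ε1, hε1, h1⟩ := hU z hz.1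
    obtain ⟨ε2, hε2, h2⟩ := hV z hz.2
    refine ⟨min ε1 ε2, lt_min hε1 hε2, fun w hw => ⟨h1 ⟨hw.1, ?_⟩, h2 ⟨hw.1, ?_⟩⟩⟩
    · exact hw.2.imp (fun h => h.trans_le (min_le_left _ _)) (fun h => h.trans_le (min_le_left _ _))
    · exact hw.2.imp (fun h => h.trans_le (min_le_right _ _)) (fun h => h.trans_le (min_le_right _ _))
  isOpen_sUnion := by
    intro S hS z hz
    obtain ⟨U, hU, hzU⟩ := hz
    obtain ⟨ε, hε, h⟩ := hS U hU z hzU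
    exact ⟨ε, hε, fun w hw => ⟨U, hU, h hw⟩⟩

/-- `D` is θ-discrete: every point has a neighborhood whose closure meets `D` in ≤ 1 point. -/
def ThetaDiscrete {X : Type*} [TopologicalSpace X] (D : Set X) : Prop :=
  ∀ x : X, ∃ O ∈ nhds x, (closure O ∩ D).Subsingleton

/-- `D` is θ-closed: every point outside `D` has a neighborhood whose closure misses `D`. -/
def ThetaClosed {X : Type*} [TopologicalSpace X] (D : Set X) : Prop :=
  ∀ x : X, x ∉ D → ∃ O ∈ nhds x, closure O ∩ D = ∅

/-- `D` is discrete (as a subset): every point has a neighborhood meeting `D` in ≤ 1 point. -/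
def DiscreteIn {X : Type*} [TopologicalSpace X] (D : Set X) : Prop :=
  ∀ x : X, ∃ O ∈ nhds x, (O ∩ D).Subsingleton

/-!
A point `z = (a, b)` of the Bing space only sees the rational axis near its two feet
`a ∓ b/√3`, and `w` lies in the closure of the basic neighbourhood of radius `ε` of `z` only if
some foot of `w` is within `ε` of some foot of `z`. As `√3` is irrational, distinct points have
disjoint feet, so a set is θ-closed as soon as the union of the feet of its points is closed in
`ℝ`. This holds for `ℤ × {0}` and for `{(0,0)} ∪ {(0, 1/(n+1)) : n ∈ ℕ}`. The first set is
moreover θ-discrete, while in the second the closure of every neighbourhood of the origin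
contains the points `(0, 1/(n+1))` for large `n`, whose feet tend to `0`. Since θ-discreteness
is invariant under homeomorphisms, no bijection between the two sets extends to one.
-/

open Set Metric Filter Topology

lemma rat_add_div_sqrt_three_injective {a b c d : ℚ}
    (h : (a : ℝ) + b / √3 = c + d / √3) : a = c ∧ b = d := by
  have hbd : b = d := by
    by_contra hne
    have hirr : Irrational (((b - d : ℚ) : ℝ) / √3) :=
      (Nat.prime_three.irrational_sqrt.ratCast_div (sub_ne_zero.2 hne) :)
    exact hirr ⟨c - a, by push_cast; linear_combination -h⟩
  subst hbd
  exact ⟨by exact_mod_cast add_right_cancel h, rfl⟩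

section Theta

variable {X : Type*} [TopologicalSpace X] {D : Set X}

lemma ThetaDiscrete.discreteIn (h : ThetaDiscrete D) : DiscreteIn D := fun x =>
  let ⟨O, hO, hs⟩ := h x
  ⟨O, hO, hs.anti (inter_subset_inter_left _ subset_closure)⟩

lemma ThetaClosed.thetaDiscrete (hD : ThetaClosed D)
    (h : ∀ x ∈ D, ∃ O ∈ 𝓝 x, closure O ∩ D ⊆ {x}) : ThetaDiscrete D := by
  intro x
  by_cases hx : x ∈ D
  · obtain ⟨O, hO, hsub⟩ := h x hx
    exact ⟨O, hO, subsingleton_singleton.anti hsub⟩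
  · obtain ⟨O, hO, hempty⟩ := hD x hx
    exact ⟨O, hO, hempty ▸ subsingleton_empty⟩

lemma ThetaDiscrete.preimage_homeomorph {Y : Type*} [TopologicalSpace Y] {D : Set Y}
    (hD : ThetaDiscrete D) (h : X ≃ₜ Y) : ThetaDiscrete (h ⁻¹' D) := by
  intro x
  obtain ⟨O, hO, hs⟩ := hD (h x)
  refine ⟨h ⁻¹' O, h.continuous.continuousAt.preimage_mem_nhds hO, ?_⟩
  rw [← h.preimage_closure, ← preimage_inter]
  exact hs.preimage h.injective

end Theta

lemma Function.Injective.preimage_eq_of_extends {α β : Type*} {e : α → β}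
    (he : Function.Injective e) {A : Set α} {C : Set β} {f : A → C}
    (hf : Function.Surjective f) (hef : ∀ z : A, e z = f z) : e ⁻¹' C = A := by
  ext z
  refine ⟨fun hz => ?_, fun hz => show e z ∈ C from (hef ⟨z, hz⟩).symm ▸ (f ⟨z, hz⟩).2⟩
  obtain ⟨a, ha⟩ := hf ⟨e z, hz⟩
  exact he ((hef a).trans (congrArg Subtype.val ha)) ▸ a.2

namespace BingPt

@[ext]
lemma ext {z w : BingPt} (hx : z.x = w.x) (hy : z.y = w.y) : z = w := by
  cases z; cases w; simp_all

/-- The lines of slope `±√3` through `z = (a, b)` meet the axis at its feet `a ∓ b/√3`. -/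
def feet (z : BingPt) : Set ℝ := {(z.x : ℝ) - z.y / √3, (z.x : ℝ) + z.y / √3}

lemma feet_nonempty (z : BingPt) : z.feet.Nonempty := insert_nonempty _ _

lemma isCompact_feet (z : BingPt) : IsCompact z.feet :=
  ((finite_singleton _).insert _).isCompact

lemma feet_of_y_eq_zero {z : BingPt} (hz : z.y = 0) : z.feet = {(z.x : ℝ)} := by
  simp [feet, hz]

lemma mem_feet_iff {z : BingPt} {f : ℝ} :
    f ∈ z.feet ↔ ∃ s : ℚ, (s = -z.y ∨ s = z.y) ∧ f = z.x + s / √3 := by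
  simp [feet, sub_eq_add_neg, neg_div]

lemma eq_of_mem_feet {z w : BingPt} {f : ℝ} (hz : f ∈ z.feet) (hw : f ∈ w.feet) : z = w := by
  obtain ⟨s, hs, rfl⟩ := mem_feet_iff.1 hz
  obtain ⟨t, ht, hst⟩ := mem_feet_iff.1 hw
  obtain ⟨hx, rfl⟩ := rat_add_div_sqrt_three_injective hst
  have := z.hy
  have := w.hy
  exact ext hx (by rcases hs with rfl | rfl <;> rcases ht with h | h <;> linarith)

lemma isOpen_iff_bingOpen {U : Set BingPt} : IsOpen U ↔ BingOpen U := Iff.rfl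

lemma mem_wedge_iff {z w : BingPt} {ε : ℝ} :
    w ∈ wedge z.x z.y ε ↔ w.y = 0 ∧ (w.x : ℝ) ∈ thickening ε z.feet := by
  simp [wedge, feet, mem_thickening_iff, Real.dist_eq]

def basicNhd (z : BingPt) (ε : ℝ) : Set BingPt := insert z (wedge z.x z.y ε)

variable {z w u : BingPt} {δ ε : ℝ}

lemma isOpen_basicNhd (z : BingPt) (hε : 0 < ε) : IsOpen (basicNhd z ε) := by
  rintro w (rfl | hw)
  · exact ⟨ε, hε, subset_insert _ _⟩
  · obtain ⟨hwy, hwx⟩ := mem_wedge_iff.1 hw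
    obtain ⟨δ, hδ, hball⟩ := Metric.isOpen_iff.1 isOpen_thickening _ hwx
    refine ⟨δ, hδ, fun u hu => Or.inr (mem_wedge_iff.2 ⟨(mem_wedge_iff.1 hu).1, hball ?_⟩)⟩
    simpa [feet_of_y_eq_zero hwy] using (mem_wedge_iff.1 hu).2

lemma basicNhd_mem_nhds (z : BingPt) (hε : 0 < ε) : basicNhd z ε ∈ 𝓝 z :=
  (isOpen_basicNhd z hε).mem_nhds (mem_insert z _)

lemma feet_subset_thickening (hε : 0 < ε) (hu : u ∈ basicNhd z ε) :
    u.feet ⊆ thickening ε z.feet := by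
  rcases hu with rfl | hu
  · exact self_subset_thickening hε _
  · obtain ⟨huy, hux⟩ := mem_wedge_iff.1 hu
    rwa [feet_of_y_eq_zero huy, singleton_subset_iff]

lemma disjoint_basicNhd (hδ : 0 < δ) (hε : 0 < ε)
    (h : Disjoint (thickening δ w.feet) (thickening ε z.feet)) :
    Disjoint (basicNhd w δ) (basicNhd z ε) := by
  refine Set.disjoint_left.2 fun u hw hz => ?_
  obtain ⟨f, hf⟩ := u.feet_nonempty
  exact Set.disjoint_left.1 h (feet_subset_thickening hδ hw hf) (feet_subset_thickening hε hz hf)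

instance : T2Space BingPt := by
  refine ⟨fun w z hne => ?_⟩
  have hfeet : Disjoint w.feet z.feet :=
    Set.disjoint_left.2 fun _ hw hz => hne (eq_of_mem_feet hw hz)
  obtain ⟨δ, hδ, h⟩ := hfeet.exists_thickenings w.isCompact_feet z.isCompact_feet.isClosed
  exact ⟨_, _, isOpen_basicNhd w hδ, isOpen_basicNhd z hδ, mem_insert _ _, mem_insert _ _,
    disjoint_basicNhd hδ hδ h⟩

lemma feet_inter_cthickening_nonempty (hε : 0 < ε) (hw : w ∈ closure (basicNhd z ε)) :
    (w.feet ∩ cthickening ε z.feet).Nonempty := by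
  by_contra h
  rw [not_nonempty_iff_eq_empty, ← disjoint_iff_inter_eq_empty] at h
  obtain ⟨δ, hδ, hsub⟩ := w.isCompact_feet.exists_cthickening_subset_open
    isClosed_cthickening.isOpen_compl h.subset_compl_right
  have hdisj : Disjoint (basicNhd w δ) (basicNhd z ε) :=
    disjoint_basicNhd hδ hε <| (disjoint_compl_left.mono_left
      ((thickening_subset_cthickening _ _).trans hsub)).mono_right
      (thickening_subset_cthickening _ _)
  exact Set.disjoint_left.1 (hdisj.closure_right (isOpen_basicNhd w hδ)) (mem_insert w _) hw

lemma mem_closure_wedge {f g : ℝ} (hf : f ∈ w.feet) (hg : g ∈ z.feet) (hfg : dist f g < ε) :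
    w ∈ closure (wedge z.x z.y ε) := by
  refine mem_closure_iff.2 fun o ho hwo => ?_
  obtain ⟨δ, hδ, hsub⟩ := isOpen_iff_bingOpen.1 ho w hwo
  obtain ⟨q, hqf, hqg⟩ := Rat.denseRange_cast.exists_mem_open (isOpen_ball.inter isOpen_ball)
    ⟨f, mem_ball_self hδ, hfg⟩
  let u : BingPt := ⟨q, 0, le_rfl⟩
  exact ⟨u, hsub (mem_wedge_iff.2 ⟨rfl, mem_thickening_iff.2 ⟨f, hf, hqf⟩⟩),
    mem_wedge_iff.2 ⟨rfl, mem_thickening_iff.2 ⟨g, hg, hqg⟩⟩⟩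

variable {D : Set BingPt}

lemma thetaClosed_of_isClosed_feet (hD : IsClosed (⋃ w ∈ D, w.feet)) : ThetaClosed D := by
  intro x hx
  have hsub : x.feet ⊆ (⋃ w ∈ D, w.feet)ᶜ := fun f hf hfD => by
    obtain ⟨w, hw, hfw⟩ := mem_iUnion₂.1 hfD
    exact hx (eq_of_mem_feet hf hfw ▸ hw)
  obtain ⟨δ, hδ, hsub'⟩ := x.isCompact_feet.exists_cthickening_subset_open hD.isOpen_compl hsub
  refine ⟨basicNhd x δ, basicNhd_mem_nhds x hδ, eq_empty_of_forall_notMem fun w ⟨hw, hwD⟩ => ?_⟩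
  obtain ⟨f, hfw, hfx⟩ := feet_inter_cthickening_nonempty hδ hw
  exact hsub' hfx (mem_iUnion₂.2 ⟨w, hwD, hfw⟩)

lemma discreteIn_of_axis_subsingleton (hD : {w ∈ D | w.y = 0}.Subsingleton) : DiscreteIn D := by
  intro x
  set S := {w ∈ D | w.y = 0}
  have hS : IsClosed (S \ {x}) := (hD.anti sdiff_subset).finite.isClosed
  refine ⟨basicNhd x 1 ∩ (S \ {x})ᶜ,
    inter_mem (basicNhd_mem_nhds x one_pos) (hS.compl_mem_nhds fun h => h.2 rfl),
    (subsingleton_singleton (a := x)).anti ?_⟩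
  rintro w ⟨⟨rfl | hw, hwS⟩, hwD⟩
  · rfl
  · by_contra hne
    exact hwS ⟨⟨hwD, (mem_wedge_iff.1 hw).1⟩, hne⟩

section Convergent

variable {o : BingPt} {a : ℕ → BingPt}
  (hx : Tendsto (fun n => ((a n).x : ℝ)) atTop (𝓝 o.x))
  (hy : Tendsto (fun n => ((a n).y : ℝ)) atTop (𝓝 o.y))
include hx hy

lemma isClosed_feet_insert_range : IsClosed (⋃ w ∈ insert o (range a), w.feet) := by
  have hunion : ⋃ w ∈ insert o (range a), w.feet =
      insert ((o.x : ℝ) - o.y / √3) (range fun n => ((a n).x : ℝ) - (a n).y / √3) ∪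
      insert ((o.x : ℝ) + o.y / √3) (range fun n => ((a n).x : ℝ) + (a n).y / √3) := by
    ext f
    simp only [feet, mem_union, mem_insert_iff, mem_singleton_iff, mem_iUnion, mem_range]
    aesop
  rw [hunion]
  exact ((hx.sub (hy.div_const _)).isCompact_insert_range.union
    (hx.add (hy.div_const _)).isCompact_insert_range).isClosed

lemma not_thetaDiscrete_of_tendsto (ho : o ∈ D) (ha : ∀ n, a n ∈ D) (hne : ∀ n, a n ≠ o) :
    ¬ThetaDiscrete D := by
  intro hθ
  obtain ⟨O, hO, hsub⟩ := hθ o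
  obtain ⟨U, hUO, hU, hoU⟩ := mem_nhds_iff.1 hO
  obtain ⟨ε, hε, hwedge⟩ := isOpen_iff_bingOpen.1 hU o hoU
  obtain ⟨n, hn⟩ := (Metric.tendsto_nhds.1 (hx.add (hy.div_const √3)) ε hε).exists
  have hmem : a n ∈ closure O := closure_mono (hwedge.trans hUO)
    (mem_closure_wedge (by simp [feet]) (by simp [feet]) hn)
  exact hne n (hsub ⟨hmem, ha n⟩ ⟨subset_closure (mem_of_mem_nhds hO), ho⟩)

end Convergent

def origin : BingPt := ⟨0, 0, le_rfl⟩

def vertical (n : ℕ) : BingPt := ⟨0, 1 / (n + 1), by positivity⟩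

def integerPoint (m : ℤ) : BingPt := ⟨m, 0, le_rfl⟩

def verticalSet : Set BingPt := insert origin (range vertical)

def integerSet : Set BingPt := range integerPoint

lemma vertical_y_pos (n : ℕ) : 0 < (vertical n).y := by
  simp only [vertical]
  positivity

lemma vertical_injective : Function.Injective vertical := fun m n h => by
  simpa [vertical] using congrArg BingPt.y h

lemma integerPoint_injective : Function.Injective integerPoint := fun m n h => by
  simpa [integerPoint] using congrArg BingPt.x h

lemma feet_integerPoint (m : ℤ) : (integerPoint m).feet = {(m : ℝ)} := by
  simp [feet, integerPoint]

lemma tendsto_vertical_x : Tendsto (fun n => ((vertical n).x : ℝ)) atTop (𝓝 origin.x) := by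
  simp [vertical, origin]

lemma tendsto_vertical_y : Tendsto (fun n => ((vertical n).y : ℝ)) atTop (𝓝 origin.y) := by
  simp only [vertical, origin]
  push_cast
  exact tendsto_one_div_add_atTop_nhds_zero_nat

lemma thetaClosed_verticalSet : ThetaClosed verticalSet :=
  thetaClosed_of_isClosed_feet (isClosed_feet_insert_range tendsto_vertical_x tendsto_vertical_y)

lemma not_thetaDiscrete_verticalSet : ¬ThetaDiscrete verticalSet :=
  not_thetaDiscrete_of_tendsto tendsto_vertical_x tendsto_vertical_y (mem_insert _ _)
    (fun n => mem_insert_of_mem _ (mem_range_self n))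
    (fun n h => (vertical_y_pos n).ne' (congrArg BingPt.y h))

lemma discreteIn_verticalSet : DiscreteIn verticalSet := by
  refine discreteIn_of_axis_subsingleton ((subsingleton_singleton (a := origin)).anti ?_)
  rintro w ⟨rfl | ⟨n, rfl⟩, hy⟩
  · rfl
  · exact absurd hy (vertical_y_pos n).ne'

lemma thetaClosed_integerSet : ThetaClosed integerSet := by
  refine thetaClosed_of_isClosed_feet ?_
  have : ⋃ w ∈ integerSet, w.feet = range ((↑) : ℤ → ℝ) := by
    ext f
    simp [integerSet, feet_integerPoint, eq_comm]
  exact this ▸ Int.isClosedEmbedding_coe_real.isClosed_range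

lemma thetaDiscrete_integerSet : ThetaDiscrete integerSet := by
  refine thetaClosed_integerSet.thetaDiscrete ?_
  rintro _ ⟨m, rfl⟩
  refine ⟨basicNhd (integerPoint m) (1 / 2), basicNhd_mem_nhds _ (by norm_num), ?_⟩
  rintro _ ⟨hw, k, rfl⟩
  obtain ⟨f, hfk, hfm⟩ := feet_inter_cthickening_nonempty (by norm_num) hw
  rw [feet_integerPoint, mem_singleton_iff] at hfk
  rw [feet_integerPoint, cthickening_singleton _ (by norm_num), hfk, mem_closedBall,
    Int.dist_cast_real] at hfm
  by_contra hne
  exact absurd (Int.pairwise_one_le_dist (fun h => hne (congrArg _ h))) (by linarith)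

lemma nonempty_equiv_verticalSet_integerSet : Nonempty (verticalSet ≃ integerSet) := by
  have : Countable verticalSet := ((countable_range _).insert _).to_subtype
  have : Infinite verticalSet :=
    ((infinite_range_of_injective vertical_injective).mono (subset_insert _ _)).to_subtype
  have : Countable integerSet := (countable_range _).to_subtype
  have : Infinite integerSet := (infinite_range_of_injective integerPoint_injective).to_subtype
  exact nonempty_equiv_of_countable

end BingPt

/-- There is a bijection between two θ-closed discrete subsets of the Bing space which
extends to no homeomorphism of the Bing space, since one set is θ-discrete and the
other is not. -/
theorem bing_nonextendable_bijection :
    ∃ A C : Set BingPt, ThetaClosed A ∧ DiscreteIn A ∧ ThetaClosed C ∧ DiscreteIn C ∧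
      ¬ ThetaDiscrete A ∧ ThetaDiscrete C ∧
      ∃ f : A → C, Function.Bijective f ∧
        ¬ ∃ h : BingPt ≃ₜ BingPt, ∀ z : A, h (z : BingPt) = (f z : BingPt) := by
  obtain ⟨f⟩ := BingPt.nonempty_equiv_verticalSet_integerSet
  refine ⟨_, _, BingPt.thetaClosed_verticalSet, BingPt.discreteIn_verticalSet,
    BingPt.thetaClosed_integerSet, BingPt.thetaDiscrete_integerSet.discreteIn,
    BingPt.not_thetaDiscrete_verticalSet, BingPt.thetaDiscrete_integerSet, f, f.bijective, ?_⟩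
  rintro ⟨h, hf⟩
  apply BingPt.not_thetaDiscrete_verticalSet
  rw [← h.injective.preimage_eq_of_extends f.surjective hf]
  exact BingPt.thetaDiscrete_integerSet.preimage_homeomorph h
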